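/- For every λ ∈ ℝ, every α ∈ ℝ, and every sufficiently small δ > 0, there exist at most N points y₁,…,y_n ∈ [0, 2π) (with N a universal constant) such that |cos(y) sin(y + α) - λ| ≥ c₁ δ² whenever |y - y_j| ≥ δ for all j, where c₁ > 0 is a universal constant. -/

import Mathlib

/-!
Since `cos z sin (z + α) - λ = (sin (2z + α) - μ) / 2` with `μ = 2λ - sin α`, and replacing `μ` by
its projection `sin β` onto `[-1, 1]` only brings it closer to `sin (2z + α)`, it suffices to bound
`|sin (2z + α) - sin β| = 2 |sin (z - c₁)| |sin (z - c₂)|` from below, where `c₁ = (β - α) / 2`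
and `c₂ = (π - β - α) / 2`. By Jordan's inequality each factor is at least `2δ / π` once `z` is
`δ`-far from `c₁ + πℤ` and `c₂ + πℤ`, which within `[0, 2π)` means far from four points.
-/

open Real

lemma two_div_pi_mul_le_abs_sin {x δ : ℝ} (h : ∀ k : ℤ, δ ≤ |x - k * π|) :
    2 / π * δ ≤ |sin x| := by
  set k : ℤ := round (x / π)
  have hnear : |x - k * π| ≤ π / 2 := by
    rw [show x - k * π = (x / π - k) * π by field_simp, abs_mul, abs_of_pos pi_pos]
    nlinarith [abs_sub_round (x / π), pi_pos]
  have hsin : |sin (x - k * π)| = |sin x| := by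
    rw [sin_sub_int_mul_pi, abs_mul, abs_zpow, abs_neg, abs_one, one_zpow, one_mul]
  calc 2 / π * δ ≤ 2 / π * |x - k * π| := by gcongr; exact h k
    _ ≤ |sin x| := hsin ▸ mul_abs_le_abs_sin hnear

lemma sin_sub_sin_eq_neg_two_mul_sin_mul_sin (u β : ℝ) :
    sin u - sin β = -2 * sin ((u - β) / 2) * sin ((u - (π - β)) / 2) := by
  rw [sin_sub_sin, show (u - (π - β)) / 2 = (u + β) / 2 - π / 2 by ring, sin_sub_pi_div_two]
  ring

lemma cos_mul_sin_add (z α : ℝ) : cos z * sin (z + α) = (sin (2 * z + α) + sin α) / 2 := by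
  have := two_mul_sin_mul_cos (z + α) z
  rw [show z + α - z = α by ring, show z + α + z = 2 * z + α by ring] at this
  linarith

lemma le_abs_sub_sub_int_mul {p δ z c : ℝ} (hp : 0 < p) (hz₀ : δ ≤ z) (hz₁ : z ≤ 2 * p - δ)
    (h₀ : δ ≤ |z - toIcoMod hp 0 c|) (h₁ : δ ≤ |z - (toIcoMod hp 0 c + p)|) (k : ℤ) :
    δ ≤ |z - c - k * p| := by
  set r := toIcoMod hp 0 c
  obtain ⟨hr₀, hr₁⟩ : r ∈ Set.Ico 0 p := toIcoMod_mem_Ico' hp c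
  obtain ⟨j, hj⟩ : ∃ j : ℤ, z - c - k * p = z - r - j * p :=
    ⟨k + toIcoDiv hp 0 c, by push_cast; linear_combination -self_sub_toIcoMod_eq_mul hp 0 c⟩
  rw [hj]
  rcases le_or_gt j (-1) with hneg | hj₀
  · have : (j : ℝ) * p ≤ -p := by nlinarith [(by exact_mod_cast hneg : (j : ℝ) ≤ -1)]
    exact (by linarith : δ ≤ z - r - j * p).trans (le_abs_self _)
  rcases le_or_gt 2 j with hbig | hj₁
  · have : 2 * p ≤ (j : ℝ) * p := by nlinarith [(by exact_mod_cast hbig : (2 : ℝ) ≤ j)]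
    exact (by linarith : δ ≤ -(z - r - j * p)).trans (neg_le_abs _)
  interval_cases j
  · simpa using h₀
  · simpa [sub_sub] using h₁

lemma two_mul_sq_le_abs_sin_sub_sin {z α β δ : ℝ} (hδ : 0 ≤ δ)
    (h₁ : ∀ k : ℤ, δ ≤ |z - (β - α) / 2 - k * π|)
    (h₂ : ∀ k : ℤ, δ ≤ |z - (π - β - α) / 2 - k * π|) :
    2 * (2 / π * δ) ^ 2 ≤ |sin (2 * z + α) - sin β| := by
  rw [sin_sub_sin_eq_neg_two_mul_sin_mul_sin, show (2 * z + α - β) / 2 = z - (β - α) / 2 by ring,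
    show (2 * z + α - (π - β)) / 2 = z - (π - β - α) / 2 by ring, abs_mul, abs_mul,
    show |(-2 : ℝ)| = 2 by norm_num, mul_assoc, sq]
  gcongr
  · exact two_div_pi_mul_le_abs_sin h₁
  · exact two_div_pi_mul_le_abs_sin h₂

lemma abs_sub_projIcc_le {α : Type*} [AddCommGroup α] [LinearOrder α] [IsOrderedAddMonoid α]
    {a b s μ : α} (hab : a ≤ b) (hs : s ∈ Set.Icc a b) : |s - Set.projIcc a b hab μ| ≤ |s - μ| := by
  simpa only [Set.projIcc_of_mem hab hs] using Set.abs_projIcc_sub_projIcc (c := s) (d := μ) hab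

theorem stmt_2 :
    ∃ (N : ℕ) (c₁ δ₀ : ℝ), 0 < c₁ ∧ 0 < δ₀ ∧
      ∀ (lam α δ : ℝ), 0 < δ → δ < δ₀ →
        ∃ (n : ℕ) (y : Fin n → ℝ), n ≤ N ∧ (∀ j, y j ∈ Set.Ico (0 : ℝ) (2 * π)) ∧
          ∀ z ∈ Set.Ico (0 : ℝ) (2 * π), (∀ j, δ ≤ |z - y j|) →
            c₁ * δ ^ 2 ≤ |Real.cos z * Real.sin (z + α) - lam| := by
  refine ⟨6, 1 / 4, 1, by norm_num, by norm_num, fun lam α δ hδ hδ₁ => ?_⟩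
  set s := Set.projIcc (-1 : ℝ) 1 (by norm_num) (2 * lam - sin α)
  set β := arcsin s
  set r₁ := toIcoMod pi_pos 0 ((β - α) / 2)
  set r₂ := toIcoMod pi_pos 0 ((π - β - α) / 2)
  obtain ⟨hr₁₀, hr₁π⟩ : r₁ ∈ Set.Ico 0 π := toIcoMod_mem_Ico' _ _
  obtain ⟨hr₂₀, hr₂π⟩ : r₂ ∈ Set.Ico 0 π := toIcoMod_mem_Ico' _ _
  -- `0` and `2π - δ` keep `z` away from the ends of `[0, 2π)`, where the lattices `cᵢ + πℤ`
  -- have points outside the interval.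
  refine ⟨6, ![0, 2 * π - δ, r₁, r₁ + π, r₂, r₂ + π], le_rfl, ?_, ?_⟩
  · intro j
    fin_cases j <;>
      simp only [Fin.zero_eta, Fin.mk_one, Fin.reduceFinMk, Matrix.cons_val_zero,
        Matrix.cons_val_one, Matrix.cons_val, Set.mem_Ico] <;>
      constructor <;> linarith [pi_gt_three]
  intro z ⟨hz₀, hz₁⟩ hfar
  have hzδ : δ ≤ z := by rcases le_abs.1 (hfar 0) with h | h <;>
    simp only [Matrix.cons_val_zero] at h <;> linarith
  have hzδ' : z ≤ 2 * π - δ := by rcases le_abs.1 (hfar 1) with h | h <;>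
    simp only [Matrix.cons_val_zero, Matrix.cons_val_one] at h <;> linarith
  have hsin := two_mul_sq_le_abs_sin_sub_sin hδ.le
    (le_abs_sub_sub_int_mul pi_pos hzδ hzδ' (hfar 2) (hfar 3))
    (le_abs_sub_sub_int_mul pi_pos hzδ hzδ' (hfar 4) (hfar 5))
  have hclamp : |sin (2 * z + α) - sin β| ≤ |sin (2 * z + α) - (2 * lam - sin α)| :=
    sin_arcsin s.2.1 s.2.2 ▸ abs_sub_projIcc_le _ ⟨neg_one_le_sin _, sin_le_one _⟩
  have hπ : 1 / 2 ≤ 2 / π := by rw [le_div_iff₀ pi_pos]; linarith [pi_le_four]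
  calc 1 / 4 * δ ^ 2 = (1 / 2 * δ) ^ 2 := by ring
    _ ≤ (2 / π * δ) ^ 2 := by gcongr
    _ ≤ |sin (2 * z + α) - (2 * lam - sin α)| / 2 := by linarith
    _ = |cos z * sin (z + α) - lam| := by
      rw [cos_mul_sin_add, show (sin (2 * z + α) + sin α) / 2 - lam
        = (sin (2 * z + α) - (2 * lam - sin α)) / 2 by ring, abs_div, abs_two]
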